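/- arXiv:2204.08418 — 5 statements merged into one kernel-verified Lean document; each statement's English description precedes it below -/
import Mathlib

section
/- Let N and L be positive integers and let e_0, …, e_{L−1} ∈ ℂ^N be envelopes, at least one of which is nonzero. Then the Enveloped Sinusoid frame vectors a_{l,k,m} form a tight frame with frame constant α = N·Σ_{l=0}^{L−1} ‖e_l‖²; that is, for every w ∈ ℂ^N, Σ_{l=0}^{L−1} Σ_{k=0}^{N−1} Σ_{m=0}^{N−1} |⟨w, a_{l,k,m}⟩|² = (N·Σ_{l=0}^{L−1} ‖e_l‖²)·‖w‖². -/
open scoped BigOperators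
open Finset

/-- Inner product on ℂ^N: ⟨v, w⟩ = Σ_n v[n]·conj(w[n]). -/
noncomputable def cInner {N : ℕ} (v w : Fin N → ℂ) : ℂ :=
  ∑ n, v n * (starRingEnd ℂ) (w n)

/-- Norm on ℂ^N: ‖v‖ = ⟨v, v⟩^(1/2) = (Σ_n |v[n]|²)^(1/2). -/
noncomputable def cNorm {N : ℕ} (v : Fin N → ℂ) : ℝ :=
  Real.sqrt (∑ n, ‖v n‖ ^ 2)

/-- Enveloped Sinusoid frame vector:
    a_{e,k,m}[n] = e[(n−m) mod N]·exp(2πi·k·(n−m)/N).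
    (Fin subtraction `n - m` is subtraction mod N.) -/
noncomputable def espVec {N : ℕ} (e : Fin N → ℂ) (k m : Fin N) : Fin N → ℂ :=
  fun n => e (n - m) *
    Complex.exp (2 * Real.pi * Complex.I * ((k : ℕ) : ℂ) *
      (((((n : ℕ) : ℤ) - ((m : ℕ) : ℤ)) : ℤ) : ℂ) / ((N : ℕ) : ℂ))

/-!
For a fixed envelope `e` and shift `m`, the coefficients `k ↦ ⟨w, a_{k,m}⟩` are the discrete
Fourier transform of the pointwise product `w · conj (e (· - m))`: the shifted sinusoids
`n ↦ exp (2πik(n - m)/N)`, `k < N`, are orthogonal with squared norm `N`, whatever `m` is.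
Parseval therefore gives `∑ₖ |⟨w, a_{k,m}⟩|² = N ∑ₙ |w n|² |e (n - m)|²`, and summing over the
shifts `m` turns `∑ₘ |e (n - m)|²` into `‖e‖²`.
-/

open Complex ComplexConjugate Real

theorem sum_norm_sq_sum_mul_conj_of_orthogonal {ι κ : Type*} [Fintype ι] [Fintype κ]
    [DecidableEq ι] (V : ι → κ → ℂ) (c : ℝ)
    (hV : ∀ n p, ∑ k, conj (V n k) * V p k = if n = p then (c : ℂ) else 0) (x : ι → ℂ) :
    ∑ k, ‖∑ n, x n * conj (V n k)‖ ^ 2 = c * ∑ n, ‖x n‖ ^ 2 := by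
  apply Complex.ofReal_injective
  push_cast
  calc ∑ k, (‖∑ n, x n * conj (V n k)‖ : ℂ) ^ 2
      = ∑ n, ∑ p, x n * conj (x p) * ∑ k, conj (V n k) * V p k := by
        simp_rw [← Complex.mul_conj', map_sum, map_mul, conj_conj, Finset.sum_mul_sum,
          Finset.mul_sum]
        rw [Finset.sum_comm]
        exact Finset.sum_congr rfl fun n _ => Finset.sum_comm.trans <|
          Finset.sum_congr rfl fun p _ => Finset.sum_congr rfl fun k _ => by ring
    _ = c * ∑ n, (‖x n‖ : ℂ) ^ 2 := by
        simp_rw [hV, mul_ite, mul_zero, Finset.sum_ite_eq, Finset.mem_univ, if_true,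
          ← Complex.mul_conj', Finset.mul_sum, mul_comm]

theorem IsPrimitiveRoot.geom_sum_zpow_eq_ite {K : Type*} [Field K] {ζ : K} {N : ℕ}
    (hζ : IsPrimitiveRoot ζ N) (j : ℤ) :
    ∑ k ∈ Finset.range N, (ζ ^ j) ^ k = if (N : ℤ) ∣ j then (N : K) else 0 := by
  split_ifs with hdvd
  · simp [(hζ.zpow_eq_one_iff_dvd j).mpr hdvd]
  · have hpow : (ζ ^ j) ^ N = 1 := by
      rw [← zpow_natCast, ← zpow_mul, mul_comm, zpow_mul, zpow_natCast, hζ.pow_eq_one, one_zpow]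
    rw [geom_sum_eq (mt (hζ.zpow_eq_one_iff_dvd j).mp hdvd), hpow, sub_self, zero_div]

theorem sum_exp_two_pi_I_mul_div_eq_ite {N : ℕ} [NeZero N] (j : ℤ) :
    ∑ k : Fin N, exp (2 * π * I * (k : ℕ) * j / N) = if (N : ℤ) ∣ j then (N : ℂ) else 0 := by
  have hterm (k : ℕ) : exp (2 * π * I * k * j / N) = (exp (2 * π * I / N) ^ j) ^ k := by
    rw [← Complex.exp_int_mul, ← Complex.exp_nat_mul]; ring_nf
  simp_rw [hterm]
  rw [Fin.sum_univ_eq_sum_range (fun k => (exp (2 * π * I / N) ^ j) ^ k)]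
  exact (isPrimitiveRoot_exp N (NeZero.ne N)).geom_sum_zpow_eq_ite j

theorem Fin.natCast_dvd_val_sub_val_iff {N : ℕ} (n p : Fin N) :
    (N : ℤ) ∣ (p : ℤ) - (n : ℤ) ↔ p = n := by
  rw [← Int.modEq_iff_dvd, Int.natCast_modEq_iff, eq_comm, Fin.ext_iff]
  exact ⟨fun h => h.eq_of_lt_of_lt n.isLt p.isLt, fun h => h ▸ rfl⟩

theorem sum_conj_exp_mul_exp_eq_ite {N : ℕ} (m n p : Fin N) :
    ∑ k : Fin N, conj (exp (2 * π * I * (k : ℕ) * (((n : ℤ) - m : ℤ) : ℂ) / N)) *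
        exp (2 * π * I * (k : ℕ) * (((p : ℤ) - m : ℤ) : ℂ) / N) =
      if n = p then (N : ℂ) else 0 := by
  have : NeZero N := ⟨n.pos.ne'⟩
  have hphase (k : Fin N) :
      conj (exp (2 * π * I * (k : ℕ) * (((n : ℤ) - m : ℤ) : ℂ) / N)) *
        exp (2 * π * I * (k : ℕ) * (((p : ℤ) - m : ℤ) : ℂ) / N) =
      exp (2 * π * I * (k : ℕ) * (((p : ℤ) - n : ℤ) : ℂ) / N) := by
    rw [← exp_conj, ← Complex.exp_add]
    congr 1
    simp only [map_div₀, map_mul, conj_I, conj_ofReal, map_ofNat, map_natCast, map_intCast]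
    push_cast
    ring
  simp_rw [hphase, sum_exp_two_pi_I_mul_div_eq_ite, Fin.natCast_dvd_val_sub_val_iff, eq_comm]

theorem cNorm_sq {N : ℕ} (v : Fin N → ℂ) : cNorm v ^ 2 = ∑ n, ‖v n‖ ^ 2 :=
  Real.sq_sqrt (by positivity)

theorem sum_sum_norm_cInner_espVec_sq {N : ℕ} (e w : Fin N → ℂ) :
    ∑ k, ∑ m, ‖cInner w (espVec e k m)‖ ^ 2 = N * cNorm e ^ 2 * cNorm w ^ 2 := by
  have parseval (m : Fin N) :
      ∑ k, ‖cInner w (espVec e k m)‖ ^ 2 = N * ∑ n, ‖w n‖ ^ 2 * ‖e (n - m)‖ ^ 2 := by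
    simpa [cInner, espVec, mul_assoc, mul_pow] using
      sum_norm_sq_sum_mul_conj_of_orthogonal _ _ (sum_conj_exp_mul_exp_eq_ite m)
        (fun n => w n * conj (e (n - m)))
  have shift (n : Fin N) : ∑ m, ‖e (n - m)‖ ^ 2 = cNorm e ^ 2 := by
    have : NeZero N := ⟨n.pos.ne'⟩
    rw [cNorm_sq]
    exact Fintype.sum_equiv (Equiv.subLeft n) _ _ fun _ => rfl
  rw [Finset.sum_comm]
  calc ∑ m, ∑ k, ‖cInner w (espVec e k m)‖ ^ 2
      = N * ∑ n, ‖w n‖ ^ 2 * ∑ m, ‖e (n - m)‖ ^ 2 := by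
        simp_rw [parseval, Finset.mul_sum]
        rw [Finset.sum_comm]
    _ = N * cNorm e ^ 2 * cNorm w ^ 2 := by
        simp_rw [shift]
        rw [← Finset.sum_mul, cNorm_sq w]
        ring

theorem esp_tight_frame_general (N L : ℕ)
    (e : Fin L → Fin N → ℂ) (w : Fin N → ℂ) :
    ∑ l : Fin L, ∑ k : Fin N, ∑ m : Fin N,
        ‖cInner w (espVec (e l) k m)‖ ^ 2 =
      ((N : ℝ) * ∑ l : Fin L, cNorm (e l) ^ 2) * cNorm w ^ 2 := by
  simp_rw [sum_sum_norm_cInner_espVec_sq, Finset.mul_sum, Finset.sum_mul]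

/-- The Enveloped Sinusoid frame vectors form a tight frame with frame constant
    α = N·Σ_l ‖e_l‖². -/
theorem esp_tight_frame (N L : ℕ) (hN : 0 < N) (hL : 0 < L)
    (e : Fin L → Fin N → ℂ) (he : ∃ l, e l ≠ 0) (w : Fin N → ℂ) :
    ∑ l : Fin L, ∑ k : Fin N, ∑ m : Fin N,
        ‖cInner w (espVec (e l) k m)‖ ^ 2 =
      ((N : ℝ) * ∑ l : Fin L, cNorm (e l) ^ 2) * cNorm w ^ 2 :=
  esp_tight_frame_general N L e w
end

section
/- Let N and L be positive integers and let e_0, …, e_{L−1} ∈ ℂ^N be envelopes. Then for every w ∈ ℂ^N, every l ∈ {0, …, L−1}, and every m ∈ {0, …, N−1}, summing the squared moduli of the Enveloped Sinusoid frame coefficients over the frequency index gives Σ_{k=0}^{N−1} |⟨w, a_{l,k,m}⟩|² = N·Σ_{n=0}^{N−1} |e_l[n]|²·|w[(n+m) mod N]|². -/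
open scoped BigOperators
open Finset

/-! Since `ζ = exp (2πi/N)` has modulus one, `⟨w, a_{l,k,m}⟩` is `ζ ^ (k m)` times the `k`-th
coefficient of the discrete Fourier transform (with kernel `conj ζ`) of
`n ↦ w n · conj (e_l (n - m))`.
Parseval's identity for that transform, a consequence of the orthogonality of the characters
`n ↦ ζ ^ (k n)`, gives the sum over `k`; the shift `n ↦ n + m` puts it in the stated form. -/

open Complex ComplexConjugate

section Fourier

variable {N : ℕ}

def finDFT (ζ : ℂ) (g : Fin N → ℂ) (k : Fin N) : ℂ :=
  ∑ n, g n * ζ ^ ((k : ℕ) * n)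

theorem IsPrimitiveRoot.sum_pow_mul_conj_pow {ζ : ℂ} (hζ : IsPrimitiveRoot ζ N) (n n' : Fin N) :
    ∑ k : Fin N, ζ ^ ((k : ℕ) * n) * conj (ζ ^ ((k : ℕ) * n')) = if n = n' then (N : ℂ) else 0 := by
  have hN : N ≠ 0 := (Fin.pos n).ne'
  have hζ0 : ζ ≠ 0 := hζ.ne_zero hN
  have hconj : conj ζ = ζ⁻¹ := (inv_eq_conj (hζ.norm'_eq_one hN)).symm
  set ω := ζ ^ (n : ℕ) * ζ⁻¹ ^ (n' : ℕ) with hω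
  have hterm : ∀ k : Fin N, ζ ^ ((k : ℕ) * n) * conj (ζ ^ ((k : ℕ) * n')) = ω ^ (k : ℕ) := by
    intro k
    rw [map_pow, hconj, hω, mul_pow, ← pow_mul, ← pow_mul, mul_comm (n : ℕ), mul_comm (n' : ℕ)]
  simp_rw [hterm]
  rw [Fin.sum_univ_eq_sum_range (fun k => ω ^ k)]
  split_ifs with h
  · subst h
    simp [hω, inv_pow, mul_inv_cancel₀ (pow_ne_zero _ hζ0)]
  · have hω1 : ω ≠ 1 := fun h1 => h <| Fin.ext <| hζ.pow_inj n.isLt n'.isLt <| by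
      rwa [hω, inv_pow, mul_inv_eq_one₀ (pow_ne_zero _ hζ0)] at h1
    have hωN : ω ^ N = 1 := by
      rw [hω, mul_pow, ← pow_mul, ← pow_mul, mul_comm (n : ℕ), mul_comm (n' : ℕ), pow_mul,
        pow_mul, inv_pow, hζ.pow_eq_one]
      simp
    rw [geom_sum_eq hω1, hωN, sub_self, zero_div]

theorem IsPrimitiveRoot.sum_norm_finDFT_sq {ζ : ℂ} (hζ : IsPrimitiveRoot ζ N) (g : Fin N → ℂ) :
    ∑ k, ‖finDFT ζ g k‖ ^ 2 = N * ∑ n, ‖g n‖ ^ 2 := by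
  apply ofReal_injective
  push_cast
  simp_rw [← mul_conj']
  calc ∑ k, finDFT ζ g k * conj (finDFT ζ g k)
      = ∑ n, ∑ n', g n * conj (g n') *
          ∑ k : Fin N, ζ ^ ((k : ℕ) * n) * conj (ζ ^ ((k : ℕ) * n')) := by
        simp only [finDFT, map_sum, map_mul]
        simp_rw [sum_mul_sum, mul_sum]
        rw [sum_comm]
        refine sum_congr rfl fun n _ => ?_
        rw [sum_comm]
        refine sum_congr rfl fun n' _ => sum_congr rfl fun k _ => ?_
        ring
    _ = N * ∑ n, g n * conj (g n) := by
        simp only [hζ.sum_pow_mul_conj_pow, mul_ite, mul_zero, sum_ite_eq, mem_univ, if_true,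
          mul_sum]
        exact sum_congr rfl fun n _ => mul_comm _ _

end Fourier

theorem cInner_espVec {N : ℕ} (hN : N ≠ 0) (w e : Fin N → ℂ) (k m : Fin N) :
    cInner w (espVec e k m) = exp (2 * Real.pi * I / N) ^ ((k : ℕ) * m) *
      finDFT (conj (exp (2 * Real.pi * I / N))) (fun n => w n * conj (e (n - m))) k := by
  set ζ := exp (2 * Real.pi * I / N)
  have hphase : ∀ n : Fin N,
      espVec e k m n = e (n - m) * (ζ ^ ((k : ℕ) * n) * conj (ζ ^ ((k : ℕ) * m))) := by
    intro n
    rw [← inv_eq_conj (by rw [norm_pow, (isPrimitiveRoot_exp N hN).norm'_eq_one hN, one_pow]),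
      ← exp_nat_mul, ← exp_nat_mul, ← exp_neg, ← exp_add]
    unfold espVec
    congr 2
    push_cast
    ring
  rw [cInner, finDFT, mul_sum]
  refine sum_congr rfl fun n _ => ?_
  rw [hphase, map_mul, map_mul, conj_conj, map_pow]
  ring

theorem sum_norm_mul_conj_sub_sq {N : ℕ} [NeZero N] (w e : Fin N → ℂ) (m : Fin N) :
    ∑ n, ‖w n * conj (e (n - m))‖ ^ 2 = ∑ n, ‖e n‖ ^ 2 * ‖w (n + m)‖ ^ 2 := by
  rw [← Equiv.sum_comp (Equiv.addRight m) (fun n => ‖w n * conj (e (n - m))‖ ^ 2)]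
  simp [mul_pow, mul_comm]

theorem esp_freq_sum_general (N L : ℕ) (hN : 0 < N)
    (e : Fin L → Fin N → ℂ) (w : Fin N → ℂ) (l : Fin L) (m : Fin N) :
    ∑ k : Fin N, ‖cInner w (espVec (e l) k m)‖ ^ 2 =
      (N : ℝ) * ∑ n : Fin N,
        ‖e l n‖ ^ 2 * ‖w (n + m)‖ ^ 2 := by
  have : NeZero N := ⟨hN.ne'⟩
  have hζ := isPrimitiveRoot_exp N hN.ne'
  have hζ' := hζ.map_of_injective (starRingEnd ℂ).injective
  simp_rw [cInner_espVec hN.ne', norm_mul, norm_pow, hζ.norm'_eq_one hN.ne', one_pow, one_mul]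
  rw [hζ'.sum_norm_finDFT_sq, sum_norm_mul_conj_sub_sq]

/-- Summing the squared moduli of the ESP frame coefficients over the
    frequency index. -/
theorem esp_freq_sum (N L : ℕ) (hN : 0 < N) (hL : 0 < L)
    (e : Fin L → Fin N → ℂ) (w : Fin N → ℂ) (l : Fin L) (m : Fin N) :
    ∑ k : Fin N, ‖cInner w (espVec (e l) k m)‖ ^ 2 =
      (N : ℝ) * ∑ n : Fin N,
        ‖e l n‖ ^ 2 * ‖w (n + m)‖ ^ 2 :=
  esp_freq_sum_general N L hN e w l m
end

section
/- Let N and L be positive integers and let e_0, …, e_{L−1} ∈ ℂ^N be envelopes. Then the Enveloped Sinusoid analysis coefficients can be computed in the Fourier domain by a frequency-shifted correlation: for every w ∈ ℂ^N, every l ∈ {0, …, L−1}, and all k, m ∈ {0, …, N−1}, ⟨w, a_{l,k,m}⟩ = (1/N)·Σ_{f=0}^{N−1} DFT(w)[f]·conj(DFT(e_l)[(f−k) mod N])·exp(2πi·f·m/N). -/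
open scoped BigOperators
open Finset

/-- The (non-unitary) discrete Fourier transform:
    DFT(v)[f] = Σ_n v[n]·exp(−2πi·f·n/N). -/
noncomputable def dft {N : ℕ} (v : Fin N → ℂ) : Fin N → ℂ :=
  fun f => ∑ n, v n *
    Complex.exp (-(2 * Real.pi * Complex.I * ((f : ℕ) : ℂ) * ((n : ℕ) : ℂ))
      / ((N : ℕ) : ℂ))

/-! Parseval's identity for the DFT on `ZMod N` turns `⟨w, a⟩` into
`N⁻¹ Σ_f ŵ(f) conj(â(f))`. Since `a_{l,k,m}` is `e_l` modulated by `k` and then translated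
by `m`, its transform is `â(f) = exp(-2πi f m / N) ê_l(f - k)`. -/

open ZMod Complex ComplexConjugate Real

namespace ZMod

variable {N : ℕ} [NeZero N]

section Translation

variable {E : Type*} [AddCommGroup E] [Module ℂ E]

lemma dft_comp_sub_const (Φ : ZMod N → E) (m k : ZMod N) :
    𝓕 (fun j ↦ Φ (j - m)) k = stdAddChar (-(m * k)) • 𝓕 Φ k := by
  simp only [dft_apply, smul_sum, smul_smul, ← AddChar.map_add_eq_mul]
  rw [← Equiv.sum_comp (Equiv.addRight m)]
  refine sum_congr rfl fun j _ ↦ ?_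
  simp only [Equiv.coe_addRight, add_sub_cancel_right]
  ring_nf

lemma dft_stdAddChar_mul_smul (Φ : ZMod N → E) (a k : ZMod N) :
    𝓕 (fun j ↦ stdAddChar (a * j) • Φ j) k = 𝓕 Φ (k - a) := by
  simp only [dft_apply, smul_smul, ← AddChar.map_add_eq_mul]
  refine sum_congr rfl fun j _ ↦ ?_
  ring_nf

end Translation

lemma sum_dft_mul_conj_dft (Φ Ψ : ZMod N → ℂ) :
    ∑ k, 𝓕 Φ k * conj (𝓕 Ψ k) = N * ∑ j, Φ j * conj (Ψ j) := by
  have hconj (j : ZMod N) : ∑ k, stdAddChar (-(j * k)) * conj (𝓕 Ψ k) = conj (N * Ψ j) := by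
    rw [← neg_neg j, ← smul_eq_mul, ← congr_fun (dft_dft Ψ), dft_apply, map_sum]
    refine sum_congr rfl fun k _ ↦ ?_
    rw [smul_eq_mul, map_mul, ← AddChar.map_neg_eq_conj]
    ring_nf
  calc ∑ k, 𝓕 Φ k * conj (𝓕 Ψ k)
      = ∑ j, Φ j * ∑ k, stdAddChar (-(j * k)) * conj (𝓕 Ψ k) := by
        simp only [dft_apply, smul_eq_mul, sum_mul, mul_sum]
        rw [sum_comm]
        exact sum_congr rfl fun _ _ ↦ sum_congr rfl fun _ _ ↦ by ring
    _ = N * ∑ j, Φ j * conj (Ψ j) := by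
        simp only [hconj, map_mul, map_natCast, mul_sum]
        exact sum_congr rfl fun _ _ ↦ by ring

lemma finEquiv_apply (x : Fin N) : finEquiv N x = (x : ℕ) := by
  obtain ⟨n, rfl⟩ : ∃ n, N = n + 1 := Nat.exists_eq_succ_of_ne_zero (NeZero.ne N)
  exact (Fin.cast_val_eq_self x).symm

end ZMod

section Reindex

variable {N : ℕ} [NeZero N]

def reindexZMod (v : Fin N → ℂ) : ZMod N → ℂ := v ∘ (finEquiv N).symm

@[simp]
lemma reindexZMod_finEquiv (v : Fin N → ℂ) (n : Fin N) :
    reindexZMod v (finEquiv N n) = v n := by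
  simp [reindexZMod]

lemma cInner_eq_sum_reindexZMod (v u : Fin N → ℂ) :
    cInner v u = ∑ j, reindexZMod v j * conj (reindexZMod u j) :=
  Fintype.sum_equiv (finEquiv N).toEquiv _ _ fun n ↦ by simp

lemma dft_eq_dft_reindexZMod (v : Fin N → ℂ) (f : Fin N) :
    dft v f = 𝓕 (reindexZMod v) (finEquiv N f) := by
  rw [dft_apply, ← (finEquiv N).toEquiv.sum_comp]
  refine sum_congr rfl fun n _ ↦ ?_
  have hcast : -(finEquiv N n * finEquiv N f)
      = ((-(((f : ℕ) : ℤ) * ((n : ℕ) : ℤ)) : ℤ) : ZMod N) := by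
    push_cast [finEquiv_apply]; ring
  simp only [RingEquiv.toEquiv_eq_coe, EquivLike.coe_coe, reindexZMod_finEquiv, smul_eq_mul]
  rw [hcast, stdAddChar_coe]
  push_cast
  ring_nf

lemma exp_eq_stdAddChar_finEquiv_mul (a b : Fin N) :
    exp (2 * π * I * (a : ℕ) * (b : ℕ) / N) = stdAddChar (finEquiv N a * finEquiv N b) := by
  have hcast : finEquiv N a * finEquiv N b
      = ((((a : ℕ) : ℤ) * ((b : ℕ) : ℤ) : ℤ) : ZMod N) := by
    push_cast [finEquiv_apply]; ring
  rw [hcast, stdAddChar_coe]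
  push_cast
  ring_nf

lemma espVec_eq_stdAddChar_mul (e : Fin N → ℂ) (k m n : Fin N) :
    espVec e k m n = stdAddChar (finEquiv N k * (finEquiv N n - finEquiv N m)) * e (n - m) := by
  have hcast : finEquiv N k * (finEquiv N n - finEquiv N m)
      = (((k : ℕ) * ((n : ℕ) - (m : ℕ) : ℤ) : ℤ) : ZMod N) := by
    push_cast [finEquiv_apply]; ring
  rw [espVec, hcast, stdAddChar_coe]
  push_cast
  ring_nf

lemma reindexZMod_espVec (e : Fin N → ℂ) (k m : Fin N) :
    reindexZMod (espVec e k m) = fun j ↦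
      stdAddChar (finEquiv N k * (j - finEquiv N m)) • reindexZMod e (j - finEquiv N m) := by
  funext j
  obtain ⟨n, rfl⟩ := (finEquiv N).surjective j
  rw [← map_sub, reindexZMod_finEquiv, reindexZMod_finEquiv, espVec_eq_stdAddChar_mul, map_sub,
    smul_eq_mul]

end Reindex

theorem esp_analysis_fourier_general (N L : ℕ) (hN : 0 < N)
    (e : Fin L → Fin N → ℂ) (w : Fin N → ℂ) (l : Fin L) (k m : Fin N) :
    cInner w (espVec (e l) k m) =
      (1 / ((N : ℕ) : ℂ)) * ∑ f : Fin N,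
        dft w f * (starRingEnd ℂ) (dft (e l) (f - k)) *
          Complex.exp (2 * Real.pi * Complex.I * ((f : ℕ) : ℂ) * ((m : ℕ) : ℂ)
            / ((N : ℕ) : ℂ)) := by
  have : NeZero N := ⟨hN.ne'⟩
  rw [cInner_eq_sum_reindexZMod, one_div, eq_inv_mul_iff_mul_eq₀ (NeZero.ne _),
    ← sum_dft_mul_conj_dft]
  refine (Fintype.sum_equiv (finEquiv N).toEquiv _ _ fun f ↦ ?_).symm
  rw [reindexZMod_espVec,
    dft_comp_sub_const (fun i ↦ stdAddChar (finEquiv N k * i) • reindexZMod (e l) i),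
    dft_stdAddChar_mul_smul, dft_eq_dft_reindexZMod, dft_eq_dft_reindexZMod, map_sub,
    exp_eq_stdAddChar_finEquiv_mul, smul_eq_mul, map_mul (starRingEnd ℂ),
    ← AddChar.map_neg_eq_conj, neg_neg]
  simp only [RingEquiv.toEquiv_eq_coe, EquivLike.coe_coe]
  ring_nf

/-- ESP analysis coefficients as a frequency-shifted correlation in the
    Fourier domain. -/
theorem esp_analysis_fourier (N L : ℕ) (hN : 0 < N) (hL : 0 < L)
    (e : Fin L → Fin N → ℂ) (w : Fin N → ℂ) (l : Fin L) (k m : Fin N) :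
    cInner w (espVec (e l) k m) =
      (1 / ((N : ℕ) : ℂ)) * ∑ f : Fin N,
        dft w f * (starRingEnd ℂ) (dft (e l) (f - k)) *
          Complex.exp (2 * Real.pi * Complex.I * ((f : ℕ) : ℂ) * ((m : ℕ) : ℂ)
            / ((N : ℕ) : ℂ)) :=
  esp_analysis_fourier_general N L hN e w l k m
end

section
/- Let N and L be positive integers and let e_0, …, e_{L−1} ∈ ℂ^N be envelopes. Then the Enveloped Sinusoid synthesis operation over the time-shift index can be computed in the Fourier domain by a frequency-shifted convolution: for every coefficient vector c ∈ ℂ^N, every l ∈ {0, …, L−1}, every k ∈ {0, …, N−1}, and every n ∈ {0, …, N−1}, Σ_{m=0}^{N−1} c[m]·a_{l,k,m}[n] = (1/N)·Σ_{f=0}^{N−1} DFT(c)[f]·DFT(e_l)[(f−k) mod N]·exp(2πi·f·n/N). -/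
open scoped BigOperators
open Finset

/-! The frame vector is a translated, modulated envelope: with the additive character
ψ(x) = exp(2πi·x/N) of ℤ/N, a_{l,k,m}[n] = e_l[n - m]·ψ(k(n - m)). The synthesis sum is thus
the cyclic convolution of c with the modulated envelope e_l·ψ(k·), whose DFT is the DFT of e_l
shifted by k, and the convolution theorem (orthogonality of characters, Σ_f ψ(f x) = N·[x = 0])
gives the formula. The argument works over any finite commutative ring with a primitive additive
character. -/

namespace AddChar

variable {R : Type*} [CommRing R] [Fintype R]

noncomputable def dft (ψ : AddChar R ℂ) (Φ : R → ℂ) (f : R) : ℂ :=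
  ∑ j, Φ j * ψ (-(f * j))

lemma dft_mul_mulShift_apply (ψ : AddChar R ℂ) (Ψ : R → ℂ) (k f : R) :
    ψ.dft (fun p ↦ Ψ p * ψ (k * p)) f = ψ.dft Ψ (f - k) := by
  refine sum_congr rfl fun p _ ↦ ?_
  rw [mul_assoc, ← map_add_eq_mul]
  ring_nf

variable [DecidableEq R] {ψ : AddChar R ℂ}

lemma sum_dft_mul_dft_mul_eq_card_mul_sum (hψ : ψ.IsPrimitive) (Φ Ψ : R → ℂ) (n : R) :
    ∑ f, ψ.dft Φ f * ψ.dft Ψ f * ψ (f * n) = Fintype.card R * ∑ m, Φ m * Ψ (n - m) := by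
  have hmul (f j p : R) : ψ (-(f * j)) * ψ (-(f * p)) * ψ (f * n) = ψ (f * (n - j - p)) := by
    rw [← map_add_eq_mul, ← map_add_eq_mul]
    ring_nf
  calc ∑ f, ψ.dft Φ f * ψ.dft Ψ f * ψ (f * n)
      = ∑ j, ∑ p, Φ j * Ψ p * ∑ f, ψ (f * (n - j - p)) := by
        simp only [dft, sum_mul, mul_sum]
        rw [sum_comm_cycle]
        refine sum_congr rfl fun j _ ↦ ?_
        rw [sum_comm]
        refine sum_congr rfl fun p _ ↦ sum_congr rfl fun f _ ↦ ?_
        rw [← hmul]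
        ring
    _ = ∑ j, Φ j * Ψ (n - j) * Fintype.card R := by
        refine sum_congr rfl fun j _ ↦ ?_
        simp only [sum_mulShift _ hψ, sub_eq_zero, Nat.cast_ite, Nat.cast_zero, mul_ite, mul_zero,
          sum_ite_eq, mem_univ, if_true]
    _ = _ := by rw [mul_sum]; exact sum_congr rfl fun _ _ ↦ mul_comm _ _

lemma sum_mul_mul_mulShift_sub_eq_sum_dft (hψ : ψ.IsPrimitive) (Φ Ψ : R → ℂ) (k n : R) :
    ∑ m, Φ m * (Ψ (n - m) * ψ (k * (n - m))) =
      (Fintype.card R : ℂ)⁻¹ * ∑ f, ψ.dft Φ f * ψ.dft Ψ (f - k) * ψ (f * n) := by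
  have hcard : (Fintype.card R : ℂ) ≠ 0 := Nat.cast_ne_zero.mpr Fintype.card_ne_zero
  simp_rw [← dft_mul_mulShift_apply, sum_dft_mul_dft_mul_eq_card_mul_sum hψ,
    inv_mul_cancel_left₀ hcard]

end AddChar

lemma ZMod.finEquiv_apply_s10 {N : ℕ} [NeZero N] (j : Fin N) :
    ZMod.finEquiv N j = ((j : ℕ) : ZMod N) := by
  obtain ⟨N, rfl⟩ := Nat.exists_eq_succ_of_ne_zero (NeZero.ne N)
  exact (Fin.cast_val_eq_self j).symm

section Fin

open Fin.CommRing

noncomputable def finStdAddChar (N : ℕ) [NeZero N] : AddChar (Fin N) ℂ :=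
  ZMod.stdAddChar.compAddMonoidHom (ZMod.finEquiv N : Fin N →+ ZMod N)

variable {N : ℕ} [NeZero N]

lemma isPrimitive_finStdAddChar : (finStdAddChar N).IsPrimitive := by
  intro a ha h
  refine ZMod.isPrimitive_stdAddChar N ((ZMod.finEquiv N).map_ne_zero_iff.mpr ha) ?_
  ext y
  obtain ⟨x, rfl⟩ := (ZMod.finEquiv N).surjective y
  simpa [finStdAddChar] using DFunLike.congr_fun h x

lemma finStdAddChar_eq_exp {x : Fin N} {a : ℤ} (h : ZMod.finEquiv N x = a) :
    finStdAddChar N x = Complex.exp (2 * Real.pi * Complex.I * a / N) := by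
  rw [← ZMod.stdAddChar_coe, ← h]
  rfl

lemma dft_eq_finStdAddChar_dft (v : Fin N → ℂ) : dft v = (finStdAddChar N).dft v := by
  ext f
  refine sum_congr rfl fun j _ ↦ congrArg (v j * ·) ?_
  rw [finStdAddChar_eq_exp (a := -((f : ℕ) * (j : ℕ)))]
  · push_cast
    ring_nf
  · rw [map_neg, map_mul, ZMod.finEquiv_apply_s10, ZMod.finEquiv_apply_s10]
    push_cast
    rfl

lemma espVec_apply (e : Fin N → ℂ) (k m n : Fin N) :
    espVec e k m n = e (n - m) * finStdAddChar N (k * (n - m)) := by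
  rw [espVec, finStdAddChar_eq_exp (a := (k : ℕ) * ((n : ℕ) - (m : ℕ) : ℤ))]
  · push_cast
    ring_nf
  · rw [map_mul, map_sub, ZMod.finEquiv_apply_s10, ZMod.finEquiv_apply_s10, ZMod.finEquiv_apply_s10]
    push_cast
    rfl

lemma exp_mul_div_eq_finStdAddChar (f n : Fin N) :
    Complex.exp (2 * Real.pi * Complex.I * (f : ℕ) * (n : ℕ) / N) = finStdAddChar N (f * n) := by
  rw [finStdAddChar_eq_exp (a := (f : ℕ) * (n : ℕ))]
  · push_cast
    ring_nf
  · rw [map_mul, ZMod.finEquiv_apply_s10, ZMod.finEquiv_apply_s10]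
    push_cast
    rfl

end Fin

theorem esp_synthesis_fourier_general (N L : ℕ)
    (e : Fin L → Fin N → ℂ) (c : Fin N → ℂ) (l : Fin L) (k : Fin N)
    (n : Fin N) :
    ∑ m : Fin N, c m * espVec (e l) k m n =
      (1 / ((N : ℕ) : ℂ)) * ∑ f : Fin N,
        dft c f * dft (e l) (f - k) *
          Complex.exp (2 * Real.pi * Complex.I * ((f : ℕ) : ℂ) * ((n : ℕ) : ℂ)
            / ((N : ℕ) : ℂ)) := by
  have : NeZero N := NeZero.of_pos n.pos
  simp only [espVec_apply, dft_eq_finStdAddChar_dft, exp_mul_div_eq_finStdAddChar, one_div]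
  open Fin.CommRing in
  simpa only [Fintype.card_fin] using
    AddChar.sum_mul_mul_mulShift_sub_eq_sum_dft isPrimitive_finStdAddChar c (e l) k n

/-- ESP synthesis over the time-shift index as a frequency-shifted
    convolution in the Fourier domain. -/
theorem esp_synthesis_fourier (N L : ℕ) (hN : 0 < N) (hL : 0 < L)
    (e : Fin L → Fin N → ℂ) (c : Fin N → ℂ) (l : Fin L) (k : Fin N)
    (n : Fin N) :
    ∑ m : Fin N, c m * espVec (e l) k m n =
      (1 / ((N : ℕ) : ℂ)) * ∑ f : Fin N,
        dft c f * dft (e l) (f - k) *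
          Complex.exp (2 * Real.pi * Complex.I * ((f : ℕ) : ℂ) * ((n : ℕ) : ℂ)
            / ((N : ℕ) : ℂ)) :=
  esp_synthesis_fourier_general N L e c l k n
end

section
/- Let N and L be positive integers and let e_0, …, e_{L−1} ∈ ℂ^N be envelopes, at least one of which is nonzero, and set α = N·Σ_{l=0}^{L−1} ‖e_l‖². Then the Enveloped Sinusoid frame reproduces every signal up to the frame constant: for every w ∈ ℂ^N, w = (1/α)·Σ_{l=0}^{L−1} Σ_{k=0}^{N−1} Σ_{m=0}^{N−1} ⟨w, a_{l,k,m}⟩·a_{l,k,m}. -/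
open scoped BigOperators
open Finset

/-! For a fixed envelope and shift `m`, the sum over the modulations `k` of
`conj (a_{k,m}[p]) * a_{k,m}[n]` is `N * |e[n - m]|² * δ_{n p}`, by orthogonality of the
`N`-th roots of unity. Summing over the shifts `m` then turns `|e[n - m]|²` into `‖e‖²`, so
each envelope contributes `N * ‖e‖² • w`, and the frame constant is nonzero as soon as one
envelope is. -/

open Complex Real ComplexConjugate

namespace EnvelopedSinusoid

theorem sum_exp_two_pi_I_mul_int_div (N : ℕ) [NeZero N] (d : ℤ) :
    ∑ k : Fin N, exp (2 * π * I * (k : ℕ) * d / N) = if (N : ℤ) ∣ d then (N : ℂ) else 0 := by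
  have hζ := isPrimitiveRoot_exp N (NeZero.ne N)
  have hterm (k : ℕ) : exp (2 * π * I * k * d / N) = (exp (2 * π * I / N) ^ d) ^ k := by
    rw [← zpow_natCast, ← zpow_mul, ← exp_int_mul]
    push_cast
    ring_nf
  rw [Fin.sum_univ_eq_sum_range (fun k => exp (2 * π * I * k * d / N))]
  simp_rw [hterm]
  split_ifs with hd
  · simp [(hζ.zpow_eq_one_iff_dvd d).2 hd]
  · have hz : exp (2 * π * I / N) ^ d ≠ 1 := mt (hζ.zpow_eq_one_iff_dvd d).1 hd
    have hzN : (exp (2 * π * I / N) ^ d) ^ N = 1 := by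
      rw [← zpow_natCast, ← zpow_mul, mul_comm d, zpow_mul, zpow_natCast, hζ.pow_eq_one, one_zpow]
    rw [geom_sum_eq hz, hzN, sub_self, zero_div]

theorem sum_exp_two_pi_I_mul_sub_div {N : ℕ} [NeZero N] (n p : Fin N) :
    ∑ k : Fin N, exp (2 * π * I * (k : ℕ) * (((n : ℕ) : ℤ) - (p : ℕ) : ℤ) / N) =
      if n = p then (N : ℂ) else 0 := by
  rw [sum_exp_two_pi_I_mul_int_div]
  congr 1
  refine propext ⟨fun h => ?_, fun h => by simp [h]⟩
  have := Int.eq_zero_of_abs_lt_dvd h (by rw [abs_lt]; omega)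
  omega

theorem conj_espVec_mul_espVec {N : ℕ} (e : Fin N → ℂ) (k m p n : Fin N) :
    conj (espVec e k m p) * espVec e k m n =
      conj (e (p - m)) * e (n - m) *
        exp (2 * π * I * (k : ℕ) * (((n : ℕ) : ℤ) - (p : ℕ) : ℤ) / N) := by
  simp only [espVec, map_mul, ← exp_conj, map_div₀, map_ofNat, conj_ofReal, conj_I, map_natCast,
    map_intCast]
  rw [mul_mul_mul_comm, ← Complex.exp_add]
  congr 2
  push_cast
  ring

theorem cNorm_eq_norm_toLp {N : ℕ} (v : Fin N → ℂ) :
    cNorm v = ‖(WithLp.toLp 2 v : EuclideanSpace ℂ (Fin N))‖ :=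
  (EuclideanSpace.norm_eq _).symm

theorem cNorm_sq {N : ℕ} (v : Fin N → ℂ) : cNorm v ^ 2 = ∑ n, ‖v n‖ ^ 2 := by
  rw [cNorm_eq_norm_toLp, EuclideanSpace.norm_sq_eq]

theorem cNorm_pos {N : ℕ} {v : Fin N → ℂ} (hv : v ≠ 0) : 0 < cNorm v := by
  rw [cNorm_eq_norm_toLp, norm_pos_iff]
  simpa using hv

theorem sum_conj_espVec_mul_espVec {N : ℕ} [NeZero N] (e : Fin N → ℂ) (m p n : Fin N) :
    ∑ k, conj (espVec e k m p) * espVec e k m n =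
      if n = p then (N : ℂ) * (‖e (n - m)‖ ^ 2 : ℝ) else 0 := by
  simp_rw [conj_espVec_mul_espVec, ← Finset.mul_sum, sum_exp_two_pi_I_mul_sub_div]
  split_ifs with h
  · rw [h, conj_mul']
    push_cast
    ring
  · rw [mul_zero]

theorem sum_sum_cInner_smul_espVec {N : ℕ} [NeZero N] (e w : Fin N → ℂ) :
    ∑ k, ∑ m, cInner w (espVec e k m) • espVec e k m = ((N * cNorm e ^ 2 : ℝ) : ℂ) • w := by
  ext n
  calc (∑ k, ∑ m, cInner w (espVec e k m) • espVec e k m) n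
      = ∑ m, ∑ p, w p * ∑ k, conj (espVec e k m p) * espVec e k m n := by
        simp only [Finset.sum_apply, Pi.smul_apply, smul_eq_mul, cInner, Finset.sum_mul,
          Finset.mul_sum, mul_assoc]
        rw [Finset.sum_comm]
        exact Finset.sum_congr rfl fun m _ => Finset.sum_comm
    _ = ∑ m, w n * ((N : ℂ) * (‖e (n - m)‖ ^ 2 : ℝ)) := by
        simp [sum_conj_espVec_mul_espVec]
    _ = ((N * cNorm e ^ 2 : ℝ) : ℂ) * w n := by
        rw [cNorm_sq, ← (Equiv.subLeft n).sum_comp]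
        simp only [Equiv.subLeft_apply, sub_sub_cancel, ← Finset.mul_sum]
        push_cast
        ring

theorem sum_sum_sum_cInner_smul_espVec {N L : ℕ} [NeZero N] (e : Fin L → Fin N → ℂ)
    (w : Fin N → ℂ) :
    ∑ l, ∑ k, ∑ m, cInner w (espVec (e l) k m) • espVec (e l) k m =
      ((N * ∑ l, cNorm (e l) ^ 2 : ℝ) : ℂ) • w := by
  simp_rw [sum_sum_cInner_smul_espVec, ← Finset.sum_smul, Finset.mul_sum]
  rw [ofReal_sum]

end EnvelopedSinusoid

open EnvelopedSinusoid

theorem esp_tight_reconstruction_general (N L : ℕ)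
    (e : Fin L → Fin N → ℂ) (he : ∃ l, e l ≠ 0) (w : Fin N → ℂ) :
    w = ((((N : ℝ) * ∑ l : Fin L, cNorm (e l) ^ 2 : ℝ) : ℂ))⁻¹ •
        ∑ l : Fin L, ∑ k : Fin N, ∑ m : Fin N,
          cInner w (espVec (e l) k m) • espVec (e l) k m := by
  obtain ⟨l₀, hl₀⟩ := he
  obtain ⟨x, -⟩ := Function.ne_iff.mp hl₀
  have : NeZero N := ⟨x.pos.ne'⟩
  have hsum : 0 < ∑ l, cNorm (e l) ^ 2 :=
    Finset.sum_pos' (fun l _ => sq_nonneg _) ⟨l₀, Finset.mem_univ _, pow_pos (cNorm_pos hl₀) 2⟩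
  have hα : (N : ℝ) * ∑ l, cNorm (e l) ^ 2 ≠ 0 :=
    mul_ne_zero (Nat.cast_ne_zero.mpr (NeZero.ne N)) hsum.ne'
  rw [sum_sum_sum_cInner_smul_espVec, smul_smul, inv_mul_cancel₀ (ofReal_ne_zero.mpr hα), one_smul]

/-- The ESP frame reproduces every signal up to the frame constant
    α = N·Σ_l ‖e_l‖². -/
theorem esp_tight_reconstruction (N L : ℕ) (hN : 0 < N) (hL : 0 < L)
    (e : Fin L → Fin N → ℂ) (he : ∃ l, e l ≠ 0) (w : Fin N → ℂ) :
    w = ((((N : ℝ) * ∑ l : Fin L, cNorm (e l) ^ 2 : ℝ) : ℂ))⁻¹ •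
        ∑ l : Fin L, ∑ k : Fin N, ∑ m : Fin N,
          cInner w (espVec (e l) k m) • espVec (e l) k m :=
  esp_tight_reconstruction_general N L e he w
end
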